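/- arXiv:2006.02087 — 3 statements merged into one kernel-verified Lean document; each statement's English description precedes it below -/
import Mathlib

section
/- For the model f(x₁,x₂) = x₁ + x₂² with X = (X₁,X₂) ~ N(0, (1/a) I₂), the Shapley effect of the first input equals a/(a+2) and that of the second input equals 2/(a+2); in particular both sum to 1 and the deviation of the first Shapley effect from 1 is exactly 2/(a+2) = O(1/a). -/
/-!
The model is additive in independent inputs, so conditioning on one input leaves its own
summand plus the mean of the other, and `Var Y` splits as `Var X₁ + Var X₂²`; the Shapley
effect of each input is then its share of the variance. For `X ~ N(0, v)` the fourth moment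
`3 v²`, read off from the moment generating function `exp (v t² / 2)`, gives `Var X₂² = 2 v²`,
whence `η₁ = v / (v + 2 v²) = a / (a + 2)` for `v = 1 / a`.
-/

open MeasureTheory ProbabilityTheory

/-- Variance of the conditional expectation of `Y` given (the σ-algebra generated by) `Z`. -/
noncomputable def varCondExp {Ω : Type*} [MeasurableSpace Ω] (P : Measure Ω)
    (Y Z : Ω → ℝ) : ℝ :=
  variance (P[Y | MeasurableSpace.comap Z inferInstance]) P

/-- Shapley effect of the first of two inputs:
`η₁ = (1/(2 Var Y)) (Var E[Y|X₁] + Var Y − Var E[Y|X₂])`. -/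
noncomputable def eta1 {Ω : Type*} [MeasurableSpace Ω] (P : Measure Ω)
    (Y X₁ X₂ : Ω → ℝ) : ℝ :=
  (1 / (2 * variance Y P)) * (varCondExp P Y X₁ + variance Y P - varCondExp P Y X₂)

open Real NNReal Polynomial

namespace ProbabilityTheory

section GaussianMoments

variable {v : ℝ≥0}

lemma hasDerivAt_mul_exp_half_mul_sq {p : ℝ → ℝ} {p' t : ℝ} (hp : HasDerivAt p p' t) :
    HasDerivAt (fun s ↦ p s * rexp (v * s ^ 2 / 2))
      ((p' + v * t * p t) * rexp (v * t ^ 2 / 2)) t := by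
  have hE : HasDerivAt (fun s ↦ rexp (v * s ^ 2 / 2)) (rexp (v * t ^ 2 / 2) * (v * t)) t := by
    convert ((hasDerivAt_pow 2 t).const_mul (v : ℝ) |>.div_const 2).exp using 1
    norm_num; ring
  exact (hp.fun_mul hE).congr_deriv (by ring)

lemma iteratedDeriv_eval_mul_exp_half_mul_sq (n : ℕ) (P : ℝ[X]) :
    iteratedDeriv n (fun s ↦ P.eval s * rexp (v * s ^ 2 / 2)) =
      fun s ↦ ((fun Q ↦ derivative Q + C (v : ℝ) * X * Q)^[n] P).eval s *
        rexp (v * s ^ 2 / 2) := by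
  induction n generalizing P with
  | zero => rfl
  | succ n ih =>
    have hderiv : deriv (fun s ↦ P.eval s * rexp (v * s ^ 2 / 2)) =
        fun s ↦ (derivative P + C (v : ℝ) * X * P).eval s * rexp (v * s ^ 2 / 2) := by
      ext t
      rw [(hasDerivAt_mul_exp_half_mul_sq (P.hasDerivAt t)).deriv]
      simp only [eval_add, eval_mul, eval_C, eval_X]
    rw [iteratedDeriv_succ', hderiv, ih, Function.iterate_succ_apply]

/-- The moment generating function of `gaussianReal 0 v` is `t ↦ exp (v t² / 2)`, so its `n`-th
derivative at `0` is read off from `n` applications of `Q ↦ Q' + v X Q` to `1`. -/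
lemma integral_pow_gaussianReal_zero (n : ℕ) :
    ∫ x, x ^ n ∂gaussianReal 0 v =
      ((fun Q ↦ derivative Q + C (v : ℝ) * X * Q)^[n] 1).eval 0 := by
  calc ∫ x, x ^ n ∂gaussianReal 0 v
      = iteratedDeriv n (mgf (fun x ↦ x) (gaussianReal 0 v)) 0 := by
        rw [iteratedDeriv_mgf_zero (by simp)]
        rfl
    _ = iteratedDeriv n (fun s ↦ (1 : ℝ[X]).eval s * rexp (v * s ^ 2 / 2)) 0 := by
        simp only [mgf_fun_id_gaussianReal, zero_mul, zero_add, eval_one, one_mul]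
    _ = _ := by
        rw [iteratedDeriv_eval_mul_exp_half_mul_sq]
        simp

lemma integral_sq_gaussianReal_zero : ∫ x, x ^ 2 ∂gaussianReal 0 v = v := by
  rw [integral_pow_gaussianReal_zero]
  simp

lemma integral_pow_four_gaussianReal_zero : ∫ x, x ^ 4 ∂gaussianReal 0 v = 3 * v ^ 2 := by
  rw [integral_pow_gaussianReal_zero]
  simp only [Function.iterate_succ_apply', Function.iterate_zero_apply, derivative_one,
    derivative_add, derivative_mul, derivative_C, derivative_X, eval_add, eval_mul, eval_C,
    derivative_zero, eval_X, eval_one, eval_zero]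
  ring

lemma memLp_sq_gaussianReal {μ : ℝ} : MemLp (fun x ↦ x ^ 2) 2 (gaussianReal μ v) :=
  (memLp_two_iff_integrable_sq (by fun_prop)).2 <| by
    simpa [← pow_mul, (by decide : Even 4).pow_abs] using
      (memLp_id_gaussianReal 4).integrable_norm_pow'

lemma variance_sq_gaussianReal_zero : Var[fun x ↦ x ^ 2; gaussianReal 0 v] = 2 * v ^ 2 := by
  rw [variance_eq_sub memLp_sq_gaussianReal]
  simp only [Pi.pow_apply, ← pow_mul, integral_pow_four_gaussianReal_zero,
    integral_sq_gaussianReal_zero]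
  ring

end GaussianMoments

end ProbabilityTheory

section AdditiveModel

variable {Ω : Type*} [MeasurableSpace Ω] {P : Measure Ω} [IsProbabilityMeasure P]
  {X Z : Ω → ℝ} {f g : ℝ → ℝ}

lemma condExp_comap_add_of_indepFun (hX : Measurable X) (hZ : Measurable Z) (hf : Measurable f)
    (hg : Measurable g) (hXZ : IndepFun X Z P) (hfX : Integrable (fun ω ↦ f (X ω)) P)
    (hgZ : Integrable (fun ω ↦ g (Z ω)) P) :
    P[fun ω ↦ f (X ω) + g (Z ω) | MeasurableSpace.comap X inferInstance] =ᵐ[P]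
      fun ω ↦ f (X ω) + P[fun ω ↦ g (Z ω)] := by
  have hfX_eq : P[fun ω ↦ f (X ω) | MeasurableSpace.comap X inferInstance] = fun ω ↦ f (X ω) :=
    condExp_of_stronglyMeasurable hX.comap_le
      (hf.comp (comap_measurable X)).stronglyMeasurable hfX
  have hgZ_eq : P[fun ω ↦ g (Z ω) | MeasurableSpace.comap X inferInstance] =ᵐ[P]
      fun _ ↦ P[fun ω ↦ g (Z ω)] :=
    condExp_indep_eq hZ.comap_le hX.comap_le (hg.comp (comap_measurable Z)).stronglyMeasurable
      hXZ.symm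
  filter_upwards [condExp_add hfX hgZ (MeasurableSpace.comap X inferInstance), hgZ_eq]
    with ω hadd hgω
  exact hadd.trans (by rw [Pi.add_apply, hfX_eq, hgω])

lemma varCondExp_add_of_indepFun_left (hX : Measurable X) (hZ : Measurable Z) (hf : Measurable f)
    (hg : Measurable g) (hXZ : IndepFun X Z P) (hfX : Integrable (fun ω ↦ f (X ω)) P)
    (hgZ : Integrable (fun ω ↦ g (Z ω)) P) :
    varCondExp P (fun ω ↦ f (X ω) + g (Z ω)) X = Var[fun ω ↦ f (X ω); P] := by
  rw [varCondExp, variance_congr (condExp_comap_add_of_indepFun hX hZ hf hg hXZ hfX hgZ),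
    variance_add_const hfX.aestronglyMeasurable]

lemma varCondExp_add_of_indepFun_right (hX : Measurable X) (hZ : Measurable Z) (hf : Measurable f)
    (hg : Measurable g) (hXZ : IndepFun X Z P) (hfX : Integrable (fun ω ↦ f (X ω)) P)
    (hgZ : Integrable (fun ω ↦ g (Z ω)) P) :
    varCondExp P (fun ω ↦ f (X ω) + g (Z ω)) Z = Var[fun ω ↦ g (Z ω); P] := by
  simpa only [add_comm] using varCondExp_add_of_indepFun_left hZ hX hg hf hXZ.symm hgZ hfX

lemma eta1_add_of_indepFun_left (hX : Measurable X) (hZ : Measurable Z) (hf : Measurable f)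
    (hg : Measurable g) (hXZ : IndepFun X Z P) (hfX : MemLp (fun ω ↦ f (X ω)) 2 P)
    (hgZ : MemLp (fun ω ↦ g (Z ω)) 2 P) :
    eta1 P (fun ω ↦ f (X ω) + g (Z ω)) X Z =
      Var[fun ω ↦ f (X ω); P] / (Var[fun ω ↦ f (X ω); P] + Var[fun ω ↦ g (Z ω); P]) := by
  have hint := hfX.integrable one_le_two
  have hint' := hgZ.integrable one_le_two
  have hvar : Var[fun ω ↦ f (X ω) + g (Z ω); P] =
      Var[fun ω ↦ f (X ω); P] + Var[fun ω ↦ g (Z ω); P] :=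
    (hXZ.comp hf hg).variance_add hfX hgZ
  rw [eta1, varCondExp_add_of_indepFun_left hX hZ hf hg hXZ hint hint',
    varCondExp_add_of_indepFun_right hX hZ hf hg hXZ hint hint', hvar]
  rcases eq_or_ne (Var[fun ω ↦ f (X ω); P] + Var[fun ω ↦ g (Z ω); P]) 0 with h | h
  · simp [h]
  · field_simp
    ring

lemma eta1_add_of_indepFun_right (hX : Measurable X) (hZ : Measurable Z) (hf : Measurable f)
    (hg : Measurable g) (hXZ : IndepFun X Z P) (hfX : MemLp (fun ω ↦ f (X ω)) 2 P)
    (hgZ : MemLp (fun ω ↦ g (Z ω)) 2 P) :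
    eta1 P (fun ω ↦ f (X ω) + g (Z ω)) Z X =
      Var[fun ω ↦ g (Z ω); P] / (Var[fun ω ↦ f (X ω); P] + Var[fun ω ↦ g (Z ω); P]) := by
  simpa only [add_comm] using eta1_add_of_indepFun_left hZ hX hg hf hXZ.symm hgZ hfX

end AdditiveModel

/-- For `Y = X₁ + X₂²` with `X₁, X₂` independent centered Gaussians of variance `1/a`,
the Shapley effects are `η₁ = a/(a+2)` and `η₂ = 2/(a+2)`; they sum to `1` and
`1 − η₁ = 2/(a+2)`. -/
theorem stmt2 {Ω : Type*} [MeasurableSpace Ω] (P : Measure Ω) [IsProbabilityMeasure P]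
    (a : ℝ) (ha : 0 < a)
    (X₁ X₂ : Ω → ℝ) (h₁ : Measurable X₁) (h₂ : Measurable X₂)
    (hindep : IndepFun X₁ X₂ P)
    (hl₁ : Measure.map X₁ P = gaussianReal 0 (Real.toNNReal (1 / a)))
    (hl₂ : Measure.map X₂ P = gaussianReal 0 (Real.toNNReal (1 / a))) :
    eta1 P (fun ω => X₁ ω + (X₂ ω) ^ 2) X₁ X₂ = a / (a + 2) ∧
    eta1 P (fun ω => X₁ ω + (X₂ ω) ^ 2) X₂ X₁ = 2 / (a + 2) ∧
    eta1 P (fun ω => X₁ ω + (X₂ ω) ^ 2) X₁ X₂ +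
      eta1 P (fun ω => X₁ ω + (X₂ ω) ^ 2) X₂ X₁ = 1 ∧
    1 - eta1 P (fun ω => X₁ ω + (X₂ ω) ^ 2) X₁ X₂ = 2 / (a + 2) := by
  set v := (1 / a).toNNReal
  have hv : (v : ℝ) = 1 / a := Real.coe_toNNReal _ (by positivity)
  have hX₁ : MeasurePreserving X₁ P (gaussianReal 0 v) := ⟨h₁, hl₁⟩
  have hX₂ : MeasurePreserving X₂ P (gaussianReal 0 v) := ⟨h₂, hl₂⟩
  have hmem₁ : MemLp (fun ω ↦ X₁ ω) 2 P := (memLp_id_gaussianReal 2).comp_measurePreserving hX₁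
  have hmem₂ : MemLp (fun ω ↦ X₂ ω ^ 2) 2 P := memLp_sq_gaussianReal.comp_measurePreserving hX₂
  have hvar₁ : Var[fun ω ↦ X₁ ω; P] = 1 / a := by
    rw [hX₁.variance_fun_comp measurable_id'.aemeasurable, variance_fun_id_gaussianReal, hv]
  have hvar₂ : Var[fun ω ↦ X₂ ω ^ 2; P] = 2 * (1 / a) ^ 2 := by
    rw [hX₂.variance_fun_comp (f := fun x ↦ x ^ 2) (by fun_prop), variance_sq_gaussianReal_zero,
      hv]
  have hη₁ := eta1_add_of_indepFun_left (f := fun x ↦ x) (g := fun x ↦ x ^ 2) h₁ h₂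
    measurable_id' (by fun_prop) hindep hmem₁ hmem₂
  have hη₂ := eta1_add_of_indepFun_right (f := fun x ↦ x) (g := fun x ↦ x ^ 2) h₁ h₂
    measurable_id' (by fun_prop) hindep hmem₁ hmem₂
  rw [hvar₁, hvar₂] at hη₁ hη₂
  simp only [hη₁, hη₂]
  refine ⟨?_, ?_, ?_, ?_⟩ <;> field_simp
  ring
end

section
/- Let f : R^p → R be C¹ with f and its growth subpolynomial: there exist C > 0 and k ∈ N with |f(x)| ≤ C(1 + ‖x‖^k) for all x. Then for each n ≥ 1, the rescaled function f_n(x) := √n (f(x/√n + μ) − f(μ)) satisfies the bound |f_n(x)| ≤ C'(‖x‖ · 1_{‖x‖ ≤ √n} + ‖x‖^k / n^{(k−1)/2} · 1_{‖x‖ > √n}) for a constant C' independent of n and x, where C' depends only on C, k, μ, and sup_{‖y‖ ≤ 1+‖μ‖} ‖Df(y)‖. -/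
/-!
Near `μ`, i.e. for `‖x‖ ≤ √n`, the point `x/√n + μ` stays in the closed unit ball around `μ`, on
which the `C¹` function `f` is Lipschitz; the factor `√n` cancels the `1/√n` of the increment.
Far from `μ` the polynomial growth bound gives `|f(y) − f(μ)| ≲ ‖y − μ‖^k` once `‖y − μ‖ ≥ 1`,
and multiplying by `√n` turns `(‖x‖/√n)^k` into `‖x‖^k / √n^(k−1)`.
-/

open Metric NNReal

variable {E : Type*} [NormedAddCommGroup E] {g : E → ℝ} {C : ℝ} {k : ℕ}

lemma abs_le_mul_pow_of_norm_le (hgrowth : ∀ x, |g x| ≤ C * (1 + ‖x‖ ^ k)) (hC : 0 ≤ C)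
    {R t : ℝ} (ht : 1 ≤ t) {z : E} (hz : ‖z‖ ≤ R * t) :
    |g z| ≤ C * (1 + R ^ k) * t ^ k := by
  have htk : 1 ≤ t ^ k := one_le_pow₀ ht
  have hzk : ‖z‖ ^ k ≤ R ^ k * t ^ k := by
    rw [← mul_pow]
    exact pow_le_pow_left₀ (norm_nonneg z) hz k
  calc |g z| ≤ C * (1 + ‖z‖ ^ k) := hgrowth z
    _ ≤ C * (t ^ k + R ^ k * t ^ k) := by gcongr
    _ = C * (1 + R ^ k) * t ^ k := by ring

lemma abs_sub_le_of_one_le_norm_sub (hgrowth : ∀ x, |g x| ≤ C * (1 + ‖x‖ ^ k)) (hC : 0 ≤ C)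
    {μ y : E} (hy : 1 ≤ ‖y - μ‖) :
    |g y - g μ| ≤ 2 * C * (1 + (1 + ‖μ‖) ^ k) * ‖y - μ‖ ^ k := by
  have hy' : ‖y‖ ≤ (1 + ‖μ‖) * ‖y - μ‖ :=
    calc ‖y‖ ≤ ‖y - μ‖ + ‖μ‖ := norm_le_norm_sub_add y μ
      _ ≤ (1 + ‖μ‖) * ‖y - μ‖ := by nlinarith [norm_nonneg μ]
  have hμ : ‖μ‖ ≤ (1 + ‖μ‖) * ‖y - μ‖ := by nlinarith [norm_nonneg μ]
  calc |g y - g μ| ≤ |g y| + |g μ| := abs_sub _ _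
    _ ≤ 2 * C * (1 + (1 + ‖μ‖) ^ k) * ‖y - μ‖ ^ k := by
      linarith [abs_le_mul_pow_of_norm_le hgrowth hC hy hy',
        abs_le_mul_pow_of_norm_le hgrowth hC hy hμ]

section Rescaling

variable [NormedSpace ℝ E]

lemma norm_inv_smul_add_sub (x μ : E) {s : ℝ} (hs : 0 < s) : ‖(s⁻¹ • x + μ) - μ‖ = ‖x‖ / s := by
  rw [add_sub_cancel_right, norm_smul, norm_inv, Real.norm_of_nonneg hs.le, inv_mul_eq_div]

lemma abs_mul_sub_le_of_lipschitzOnWith {K : ℝ≥0} {μ x : E} {s : ℝ}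
    (hg : LipschitzOnWith K g (closedBall μ 1)) (hs : 0 < s) (hx : ‖x‖ ≤ s) :
    |s * (g (s⁻¹ • x + μ) - g μ)| ≤ K * ‖x‖ := by
  have hdist : dist (s⁻¹ • x + μ) μ = ‖x‖ / s := by
    rw [dist_eq_norm, norm_inv_smul_add_sub x μ hs]
  have hmem : s⁻¹ • x + μ ∈ closedBall μ 1 := by
    rw [mem_closedBall, hdist]
    exact div_le_one_of_le₀ hx hs.le
  have hlip := hg.dist_le_mul _ hmem μ (mem_closedBall_self zero_le_one)
  rw [Real.dist_eq, hdist] at hlip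
  calc |s * (g (s⁻¹ • x + μ) - g μ)| = s * |g (s⁻¹ • x + μ) - g μ| := by
        rw [abs_mul, abs_of_pos hs]
    _ ≤ s * (K * (‖x‖ / s)) := by gcongr
    _ = K * ‖x‖ := by field_simp

lemma abs_mul_sub_le_of_lt_norm (hgrowth : ∀ x, |g x| ≤ C * (1 + ‖x‖ ^ k)) (hC : 0 ≤ C)
    (hk : 1 ≤ k) {μ x : E} {s : ℝ} (hs : 0 < s) (hx : s < ‖x‖) :
    |s * (g (s⁻¹ • x + μ) - g μ)| ≤
      2 * C * (1 + (1 + ‖μ‖) ^ k) * (‖x‖ ^ k / s ^ (k - 1)) := by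
  have hnorm := norm_inv_smul_add_sub x μ hs
  have hfar := abs_sub_le_of_one_le_norm_sub hgrowth hC
    (hnorm ▸ (one_le_div hs).2 hx.le : 1 ≤ ‖(s⁻¹ • x + μ) - μ‖)
  rw [hnorm] at hfar
  have hsk : s ^ k = s ^ (k - 1) * s := by rw [← pow_succ, Nat.sub_add_cancel hk]
  calc |s * (g (s⁻¹ • x + μ) - g μ)| = s * |g (s⁻¹ • x + μ) - g μ| := by
        rw [abs_mul, abs_of_pos hs]
    _ ≤ s * (2 * C * (1 + (1 + ‖μ‖) ^ k) * (‖x‖ / s) ^ k) := by gcongr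
    _ = 2 * C * (1 + (1 + ‖μ‖) ^ k) * (‖x‖ ^ k / s ^ (k - 1)) := by
      rw [div_pow, hsk]
      field_simp

end Rescaling

theorem stmt4_general {p : ℕ} (f : EuclideanSpace ℝ (Fin p) → ℝ) (μ : EuclideanSpace ℝ (Fin p))
    (hf : ContDiff ℝ 1 f) (C : ℝ) (k : ℕ) (hk : 1 ≤ k)
    (hgrowth : ∀ x, |f x| ≤ C * (1 + ‖x‖ ^ k)) :
    ∃ C' : ℝ, 0 < C' ∧ ∀ n : ℕ, 1 ≤ n → ∀ x : EuclideanSpace ℝ (Fin p),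
      |Real.sqrt n * (f ((Real.sqrt n)⁻¹ • x + μ) - f μ)| ≤
        C' * (if ‖x‖ ≤ Real.sqrt n then ‖x‖ else ‖x‖ ^ k / Real.sqrt n ^ (k - 1)) := by
  have hC : 0 ≤ C := nonneg_of_mul_nonneg_left ((abs_nonneg _).trans (hgrowth μ)) (by positivity)
  obtain ⟨K, hK⟩ := hf.contDiffOn.exists_lipschitzOnWith one_ne_zero (convex_closedBall μ 1)
    (isCompact_closedBall μ 1)
  set D := 2 * C * (1 + (1 + ‖μ‖) ^ k)
  have hD : 0 ≤ D := by positivity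
  refine ⟨K + D + 1, by positivity, fun n hn x => ?_⟩
  have hs : 0 < Real.sqrt n := Real.sqrt_pos.2 (by exact_mod_cast hn)
  split_ifs with hx
  · calc _ ≤ K * ‖x‖ := abs_mul_sub_le_of_lipschitzOnWith hK hs hx
      _ ≤ (K + D + 1) * ‖x‖ := by gcongr; linarith
  · calc _ ≤ D * (‖x‖ ^ k / Real.sqrt n ^ (k - 1)) :=
          abs_mul_sub_le_of_lt_norm hgrowth hC hk hs (not_le.1 hx)
      _ ≤ (K + D + 1) * (‖x‖ ^ k / Real.sqrt n ^ (k - 1)) := by gcongr; linarith [K.coe_nonneg]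

/-- If `f` is `C¹` and subpolynomial of degree `k ≥ 1`, then the rescaled functions
`f_n(x) = √n (f(x/√n + μ) − f(μ))` satisfy
`|f_n(x)| ≤ C' (‖x‖ 1_{‖x‖ ≤ √n} + ‖x‖^k/√n^{k−1} 1_{‖x‖ > √n})` uniformly in `n` and `x`. -/
theorem stmt4 {p : ℕ} (f : EuclideanSpace ℝ (Fin p) → ℝ) (μ : EuclideanSpace ℝ (Fin p))
    (hf : ContDiff ℝ 1 f) (C : ℝ) (hC : 0 < C) (k : ℕ) (hk : 1 ≤ k)
    (hgrowth : ∀ x, |f x| ≤ C * (1 + ‖x‖ ^ k)) :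
    ∃ C' : ℝ, 0 < C' ∧ ∀ n : ℕ, 1 ≤ n → ∀ x : EuclideanSpace ℝ (Fin p),
      |Real.sqrt n * (f ((Real.sqrt n)⁻¹ • x + μ) - f μ)| ≤
        C' * (if ‖x‖ ≤ Real.sqrt n then ‖x‖ else ‖x‖ ^ k / Real.sqrt n ^ (k - 1)) :=
  stmt4_general f μ hf C k hk hgrowth
end

section
/- Let densities converge uniformly: suppose X* has a density f_{X*} bounded above by b and bounded below by a > 0 on [−K,K]^p, X̃_n has density f_n with ε_n := sup_x |f_{X*}(x) − f_n(x)| ≤ a/2. Then for all x with x_u ∈ [−K,K]^{|u|} and x ∈ [−K,K]^p, the conditional density ratios satisfy |f_{X*}(x)/f_{X*_u}(x_u) − f_n(x)/f_{n,u}(x_u)| ≤ C ε_n · f_{X*}(x)/f_{X*_u}(x_u), where C depends only on a and b, and f_{X*_u}, f_{n,u} are the marginal densities on [−K,K]^{|u|} (obtained by integrating over x_{−u} ∈ [−K,K]^{|−u|}). -/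
open MeasureTheory

/-- The marginal density on the coordinates in `u`, obtained by integrating a density `f`
over the coordinates outside `u`, restricted to the box `[-K,K]`. -/
noncomputable def marg {p : ℕ} (u : Finset (Fin p)) (K : ℝ)
    (f : (Fin p → ℝ) → ℝ) (x : Fin p → ℝ) : ℝ :=
  ∫ y in Set.univ.pi (fun _ : ↥(uᶜ) => Set.Icc (-K) K),
    f (fun i => if h : i ∈ uᶜ then y ⟨i, h⟩ else x i)

/-!
On the box, `f⋆ ∈ [a, b]` and `fₙ ∈ [a/2, b + a/2]`, so with `V = (2K)^|uᶜ|` the volume of the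
box integrated over, the marginals satisfy `aV ≤ f⋆_u ≤ bV`, `fₙ,u ≥ aV/2` and
`|f⋆_u − fₙ,u| ≤ εV`. Writing `A/B − A'/B' = (A − A')/B' + A(B' − B)/(BB')` then gives the
bound with `C = 2b/a² + 2/a`.
-/

open Set

lemma abs_div_sub_div_le {A A' B B' : ℝ} (hB : 0 < B) (hB' : 0 < B') :
    |A / B - A' / B'| ≤ |A - A'| / B' + |A| * |B - B'| / (B * B') := by
  have h : A / B - A' / B' = (A - A') / B' + A * (B' - B) / (B * B') := by
    field_simp
    ring
  calc |A / B - A' / B'| ≤ |(A - A') / B'| + |A * (B' - B) / (B * B')| := h ▸ abs_add_le _ _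
    _ = |A - A'| / B' + |A| * |B - B'| / (B * B') := by
      rw [abs_div, abs_div, abs_mul, abs_sub_comm B', abs_of_pos hB', abs_of_pos (mul_pos hB hB')]

lemma abs_div_sub_div_le_mul_div {a b V ε A A' B B' : ℝ} (ha : 0 < a) (hV : 0 < V)
    (hA : a ≤ A) (hAA' : |A - A'| ≤ ε) (hB : a * V ≤ B) (hBb : B ≤ b * V)
    (hB' : a / 2 * V ≤ B') (hBB' : |B - B'| ≤ ε * V) :
    |A / B - A' / B'| ≤ (2 * b / a ^ 2 + 2 / a) * ε * (A / B) := by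
  have hA0 : 0 < A := ha.trans_le hA
  have hB0 : 0 < B := (mul_pos ha hV).trans_le hB
  have hB'0 : 0 < B' := (mul_pos (half_pos ha) hV).trans_le hB'
  have hb : 0 < b := pos_of_mul_pos_left ((mul_pos ha hV).trans_le (hB.trans hBb)) hV.le
  have hε : 0 ≤ ε := (abs_nonneg _).trans hAA'
  have h₁ : |A - A'| / B' ≤ 2 * b / a ^ 2 * ε * (A / B) :=
    calc |A - A'| / B' ≤ ε / (a / 2 * V) := by gcongr
      _ = 2 * b / a ^ 2 * ε * (a / (b * V)) := by field_simp
      _ ≤ 2 * b / a ^ 2 * ε * (A / B) := by gcongr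
  have h₂ : |A| * |B - B'| / (B * B') ≤ 2 / a * ε * (A / B) :=
    calc |A| * |B - B'| / (B * B') = A / B * (|B - B'| / B') := by
          rw [abs_of_pos hA0]; field_simp
      _ ≤ A / B * (ε * V / (a / 2 * V)) := by gcongr
      _ = 2 / a * ε * (A / B) := by field_simp
  calc |A / B - A' / B'| ≤ |A - A'| / B' + |A| * |B - B'| / (B * B') :=
        abs_div_sub_div_le hB0 hB'0
    _ ≤ 2 * b / a ^ 2 * ε * (A / B) + 2 / a * ε * (A / B) := add_le_add h₁ h₂
    _ = (2 * b / a ^ 2 + 2 / a) * ε * (A / B) := by ring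

def cube (ι : Type*) (K : ℝ) : Set (ι → ℝ) := univ.pi fun _ => Icc (-K) K

section Cube
variable {ι : Type*} {K : ℝ}

lemma mem_cube {x : ι → ℝ} : x ∈ cube ι K ↔ ∀ i, x i ∈ Icc (-K) K := by
  simp only [cube, mem_univ_pi]

lemma measurableSet_cube [Countable ι] : MeasurableSet (cube ι K) :=
  MeasurableSet.univ_pi fun _ => measurableSet_Icc

lemma volume_cube_lt_top [Fintype ι] : volume (cube ι K) < ⊤ :=
  (isCompact_univ_pi fun _ => isCompact_Icc).measure_lt_top

lemma measureReal_cube [Fintype ι] (hK : 0 ≤ K) :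
    volume.real (cube ι K) = (2 * K) ^ Fintype.card ι := by
  rw [cube, measureReal_def, volume_pi_pi, ENNReal.toReal_prod]
  simp only [Real.volume_Icc, ENNReal.toReal_ofReal (by linarith : (0:ℝ) ≤ K - -K)]
  rw [Finset.prod_const, Finset.card_univ]
  ring

end Cube

def glue {p : ℕ} (u : Finset (Fin p)) (x : Fin p → ℝ) (y : ↥uᶜ → ℝ) : Fin p → ℝ :=
  fun i => if h : i ∈ uᶜ then y ⟨i, h⟩ else x i

section Marginal
variable {p : ℕ} {u : Finset (Fin p)} {K m M ε : ℝ} {f g : (Fin p → ℝ) → ℝ} {x : Fin p → ℝ}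

lemma marg_eq_setIntegral : marg u K f x = ∫ y in cube (↥uᶜ) K, f (glue u x y) := rfl

lemma measurable_glue : Measurable (glue u x) := by
  refine measurable_pi_lambda _ fun i => ?_
  by_cases h : i ∈ uᶜ
  · simpa only [glue, h, dif_pos] using measurable_pi_apply _
  · simpa only [glue, h, dif_neg, not_false_iff] using measurable_const

lemma glue_mem_cube {y : ↥uᶜ → ℝ} (hx : x ∈ cube (Fin p) K) (hy : y ∈ cube (↥uᶜ) K) :
    glue u x y ∈ cube (Fin p) K := by
  refine mem_cube.2 fun i => ?_
  by_cases h : i ∈ uᶜ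
  · simpa only [glue, h, dif_pos] using mem_cube.1 hy ⟨i, h⟩
  · simpa only [glue, h, dif_neg, not_false_iff] using mem_cube.1 hx i

lemma integrableOn_comp_glue (hf : Measurable f) (hfm : ∀ z ∈ cube (Fin p) K, f z ∈ Icc m M)
    (hx : x ∈ cube (Fin p) K) : IntegrableOn (fun y => f (glue u x y)) (cube (↥uᶜ) K) := by
  refine Measure.integrableOn_of_bounded (M := max |m| |M|) volume_cube_lt_top.ne
    (hf.comp measurable_glue).aestronglyMeasurable ?_
  filter_upwards [self_mem_ae_restrict measurableSet_cube] with y hy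
  obtain ⟨hm, hM⟩ := hfm _ (glue_mem_cube hx hy)
  exact abs_le_max_abs_abs hm hM

lemma marg_mem_Icc (hf : Measurable f) (hfm : ∀ z ∈ cube (Fin p) K, f z ∈ Icc m M)
    (hx : x ∈ cube (Fin p) K) :
    marg u K f x ∈ Icc (m * volume.real (cube (↥uᶜ) K)) (M * volume.real (cube (↥uᶜ) K)) := by
  have hint := integrableOn_comp_glue (u := u) hf hfm hx
  rw [marg_eq_setIntegral]
  constructor
  · exact setIntegral_ge_of_const_le_real measurableSet_cube volume_cube_lt_top.ne
      (fun y hy => (hfm _ (glue_mem_cube hx hy)).1) hint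
  · calc ∫ y in cube (↥uᶜ) K, f (glue u x y) ≤ ∫ _ in cube (↥uᶜ) K, M :=
          setIntegral_mono_on hint (integrableOn_const volume_cube_lt_top.ne) measurableSet_cube
            fun y hy => (hfm _ (glue_mem_cube hx hy)).2
      _ = M * volume.real (cube (↥uᶜ) K) := by rw [setIntegral_const, smul_eq_mul, mul_comm]

lemma abs_marg_sub_marg_le (hf : IntegrableOn (fun y => f (glue u x y)) (cube (↥uᶜ) K))
    (hg : IntegrableOn (fun y => g (glue u x y)) (cube (↥uᶜ) K))
    (hfg : ∀ z, |f z - g z| ≤ ε) :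
    |marg u K f x - marg u K g x| ≤ ε * volume.real (cube (↥uᶜ) K) := by
  rw [marg_eq_setIntegral, marg_eq_setIntegral, ← integral_sub hf hg]
  exact norm_setIntegral_le_of_norm_le_const volume_cube_lt_top fun y _ =>
    (Real.norm_eq_abs _).trans_le (hfg _)

end Marginal

/-- Stability of conditional density ratios under uniform perturbation of the density:
if `a ≤ f⋆ ≤ b` on `[-K,K]^p` and `sup |f⋆ − f_n| ≤ ε_n ≤ a/2`, then
`|f⋆(x)/f⋆_u(x_u) − f_n(x)/f_{n,u}(x_u)| ≤ C ε_n f⋆(x)/f⋆_u(x_u)` on the box, where `C`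
depends only on `a` and `b`. -/
theorem stmt19 (a b : ℝ) (ha : 0 < a) (hab : a ≤ b) :
    ∃ C : ℝ, 0 < C ∧
      ∀ (p : ℕ) (u : Finset (Fin p)), u.Nonempty → u ≠ Finset.univ →
      ∀ K : ℝ, 0 < K →
      ∀ (fstar fn : (Fin p → ℝ) → ℝ), Measurable fstar → Measurable fn →
      ∀ εn : ℝ,
        (∀ x : Fin p → ℝ, (∀ i, x i ∈ Set.Icc (-K) K) → a ≤ fstar x ∧ fstar x ≤ b) →
        (∀ x, |fstar x - fn x| ≤ εn) → εn ≤ a / 2 →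
        ∀ x : Fin p → ℝ, (∀ i, x i ∈ Set.Icc (-K) K) →
          |fstar x / marg u K fstar x - fn x / marg u K fn x| ≤
            C * εn * (fstar x / marg u K fstar x) := by
  have hb : 0 < b := ha.trans_le hab
  refine ⟨2 * b / a ^ 2 + 2 / a, by positivity, ?_⟩
  intro p u _ _ K hK fstar fn hfstar hfn εn hbox hclose hεa x hx
  have hstar : ∀ z ∈ cube (Fin p) K, fstar z ∈ Icc a b := fun z hz => hbox z (mem_cube.1 hz)
  have hn : ∀ z ∈ cube (Fin p) K, fn z ∈ Icc (a / 2) (b + a / 2) := fun z hz => by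
    obtain ⟨hlo, hhi⟩ := abs_le.1 (hclose z)
    obtain ⟨ha', hb'⟩ := hstar z hz
    constructor <;> linarith
  have hx' : x ∈ cube (Fin p) K := mem_cube.2 hx
  have hV : 0 < volume.real (cube (↥uᶜ) K) := by rw [measureReal_cube hK.le]; positivity
  obtain ⟨hB, hBb⟩ := marg_mem_Icc hfstar hstar hx'
  exact abs_div_sub_div_le_mul_div ha hV (hstar x hx').1 (hclose x) hB hBb
    (marg_mem_Icc hfn hn hx').1
    (abs_marg_sub_marg_le (integrableOn_comp_glue hfstar hstar hx')
      (integrableOn_comp_glue hfn hn hx') hclose)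
end
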